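/- arXiv:1405.1482 — 3 statements merged into one kernel-verified Lean document; each statement's English description precedes it below -/
import Mathlib

section
/- For m ≥ 1 and 1 ≤ k ≤ m+2, there is a bijection between the type-1 k-splittings of m+1 (those where i₁ = m+1 and I₁ = ∅) and the (k-1)-splittings of m. In particular no 1-splitting of m+1 is of type 1. -/
open Finset

/-- A `k`-splitting of `m`: pairwise disjoint subsets `I₁,…,I_k` of `{1,…,m}` together
with indices `i₁ > … > i_{k-1}` from `{1,…,m}`, every element of `I_α` larger than `i_α`
for `α < k`, whose total union is `{1,…,m}`.  Elements of `{1,…,m}` are encoded as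
`Fin m`, with `x : Fin m` representing the integer `x + 1`. -/
structure Splitting (m k : ℕ) where
  I : Fin k → Finset (Fin m)
  idx : Fin (k - 1) → Fin m
  disj : ∀ α β, α ≠ β → Disjoint (I α) (I β)
  anti : ∀ α β : Fin (k - 1), α < β → idx β < idx α
  gt : ∀ α : Fin (k - 1), ∀ x ∈ I (Fin.castLE (Nat.sub_le k 1) α), idx α < x
  cover : (Finset.univ.biUnion I) ∪ (Finset.image idx Finset.univ) = Finset.univ

instance {m k : ℕ} : Finite (Splitting m k) :=
  Finite.of_injective (fun s => (s.I, s.idx)) (by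
    rintro ⟨I1, i1, _, _, _, _⟩ ⟨I2, i2, _, _, _, _⟩ h
    simp only [Prod.mk.injEq] at h
    obtain ⟨h1, h2⟩ := h
    subst h1; subst h2; rfl)

noncomputable instance {m k : ℕ} : Fintype (Splitting m k) := Fintype.ofFinite _

namespace Type1Aux

lemma Splitting.ext' {m k : ℕ} {s t : Splitting m k} (hI : s.I = t.I)
    (hidx : s.idx = t.idx) : s = t := by
  cases s; cases t
  simp only at hI hidx
  subst hI; subst hidx; rfl

lemma no_type1_one (m : ℕ) (s : Splitting (m + 1) 1) :
    ∃ α, ∃ x ∈ s.I α, (x : ℕ) = m := by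
  have hmem : (Fin.last m) ∈ (Finset.univ.biUnion s.I) ∪ (Finset.image s.idx Finset.univ) := by
    rw [s.cover]; exact mem_univ _
  rcases Finset.mem_union.1 hmem with h | h
  · obtain ⟨α, -, hx⟩ := Finset.mem_biUnion.1 h
    exact ⟨α, Fin.last m, hx, rfl⟩
  · obtain ⟨α, -, -⟩ := Finset.mem_image.1 h
    exact absurd α.2 (by omega)

variable {m k : ℕ}

lemma idx0_eq_last (s : Splitting (m + 1) (k + 2))
    (hs : ∀ α, ∀ x ∈ s.I α, (x : ℕ) ≠ m) :
    s.idx (0 : Fin (k + 1)) = Fin.last m := by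
  have hmem : (Fin.last m) ∈ (Finset.univ.biUnion s.I) ∪ (Finset.image s.idx Finset.univ) := by
    rw [s.cover]; exact mem_univ _
  rcases Finset.mem_union.1 hmem with h | h
  · obtain ⟨α, -, hx⟩ := Finset.mem_biUnion.1 h
    exact absurd rfl (hs α _ hx)
  · obtain ⟨α, -, hα⟩ := Finset.mem_image.1 h
    have : α = (0 : Fin (k + 1)) := by
      by_contra hne
      have h0 : (0 : Fin (k + 1)) < α := Fin.pos_of_ne_zero hne
      have hlt := s.anti (0 : Fin (k + 1)) α h0
      rw [hα] at hlt
      exact absurd hlt (not_lt.2 (Fin.le_last _))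
    rw [← this]; exact hα

lemma I0_empty (s : Splitting (m + 1) (k + 2))
    (hs : ∀ α, ∀ x ∈ s.I α, (x : ℕ) ≠ m) :
    s.I (0 : Fin (k + 2)) = ∅ := by
  ext x
  simp only [Finset.notMem_empty, iff_false]
  intro hx
  have h := s.gt (0 : Fin (k + 1)) x hx
  rw [idx0_eq_last s hs] at h
  exact absurd h (not_lt.2 (Fin.le_last _))

/-- forward map: drop `I₁ = ∅` and `i₁ = m+1`. -/
noncomputable def fwd (s : Splitting (m + 1) (k + 2))
    (hs : ∀ α, ∀ x ∈ s.I α, (x : ℕ) ≠ m) : Splitting m (k + 1) where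
  I := fun β => (s.I β.succ).preimage Fin.castSucc (Fin.castSucc_injective _).injOn
  idx := fun β : Fin k => ⟨(s.idx β.succ : Fin (m + 1)).val, by
    have h := s.anti (0 : Fin (k + 1)) β.succ (Fin.succ_pos β)
    rw [idx0_eq_last s hs] at h
    exact h⟩
  disj := by
    intro α β hne
    have h := s.disj α.succ β.succ (fun h => hne (Fin.succ_injective _ h))
    rw [Finset.disjoint_left] at h ⊢
    intro x hx hx'
    exact h (Finset.mem_preimage.1 hx) (Finset.mem_preimage.1 hx')
  anti := by
    intro α β hlt
    have h := s.anti α.succ β.succ (Fin.succ_lt_succ_iff.2 hlt)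
    exact h
  gt := by
    intro β x hx
    have h := s.gt β.succ (Fin.castSucc x) (Finset.mem_preimage.1 hx)
    exact h
  cover := by
    ext y
    simp only [Finset.mem_union, Finset.mem_biUnion, Finset.mem_image, Finset.mem_univ,
      true_and, iff_true, Finset.mem_preimage]
    have hy : Fin.castSucc y ∈ (Finset.univ.biUnion s.I) ∪ (Finset.image s.idx Finset.univ) := by
      rw [s.cover]; exact mem_univ _
    rcases Finset.mem_union.1 hy with h | h
    · obtain ⟨α, -, hx⟩ := Finset.mem_biUnion.1 h
      rcases Fin.eq_zero_or_eq_succ α with rfl | ⟨β, rfl⟩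
      · rw [I0_empty s hs] at hx
        exact absurd hx (Finset.notMem_empty _)
      · exact Or.inl ⟨β, hx⟩
    · obtain ⟨α, -, hα⟩ := Finset.mem_image.1 h
      rcases Fin.eq_zero_or_eq_succ (α : Fin (k + 1)) with rfl | ⟨β, rfl⟩
      · rw [idx0_eq_last s hs] at hα
        exact absurd hα.symm (Fin.ne_of_lt (Fin.castSucc_lt_last y))
      · refine Or.inr ⟨β, ?_⟩
        apply Fin.ext
        show (s.idx β.succ : Fin (m + 1)).val = y.val
        rw [hα]
        rfl

/-- backward map: prepend `I₁ = ∅` and `i₁ = m+1`. -/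
def bwd (t : Splitting m (k + 1)) : Splitting (m + 1) (k + 2) where
  I := fun α => Fin.cases ∅ (fun β => (t.I β).image Fin.castSucc) α
  idx := fun α : Fin (k + 1) => Fin.cases (Fin.last m) (fun β => (t.idx β).castSucc) α
  disj := by
    intro α β hne
    rcases Fin.eq_zero_or_eq_succ α with rfl | ⟨α', rfl⟩ <;>
      rcases Fin.eq_zero_or_eq_succ β with rfl | ⟨β', rfl⟩
    · exact absurd rfl hne
    · simp
    · simp
    · simp only [Fin.cases_succ]
      rw [Finset.disjoint_image (Fin.castSucc_injective _)]
      exact t.disj α' β' (fun h => hne (by rw [h]))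
  anti := by
    intro α β hlt
    rcases Fin.eq_zero_or_eq_succ (α : Fin (k + 1)) with rfl | ⟨α', rfl⟩ <;>
      rcases Fin.eq_zero_or_eq_succ (β : Fin (k + 1)) with rfl | ⟨β', rfl⟩
    · exact absurd hlt (lt_irrefl _)
    · simp only [Fin.cases_succ, Fin.cases_zero]
      exact Fin.castSucc_lt_last _
    · exact absurd (Fin.lt_def.1 hlt) (by simp)
    · simp only [Fin.cases_succ]
      exact Fin.castSucc_lt_castSucc_iff.2 (t.anti α' β' (Fin.succ_lt_succ_iff.1 hlt))
  gt := by
    intro α x hx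
    rcases Fin.eq_zero_or_eq_succ (α : Fin (k + 1)) with rfl | ⟨β, rfl⟩
    · have : (Fin.castLE (Nat.sub_le (k + 2) 1) (0 : Fin (k + 1))) = (0 : Fin (k + 2)) := rfl
      rw [this] at hx
      simp only [Fin.cases_zero] at hx
      exact absurd hx (Finset.notMem_empty _)
    · have hcast : (Fin.castLE (Nat.sub_le (k + 2) 1) β.succ)
          = (Fin.castSucc β.succ : Fin (k + 2)) := rfl
      rw [hcast] at hx
      simp only [Fin.cases_succ]
      have hx' : x ∈ Fin.cases (motive := fun _ => Finset (Fin (m + 1))) ∅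
          (fun β => (t.I β).image Fin.castSucc) ((Fin.castSucc β).succ) := hx
      simp only [Fin.cases_succ] at hx'
      obtain ⟨y, hy, rfl⟩ := Finset.mem_image.1 hx'
      have := t.gt β y hy
      exact Fin.castSucc_lt_castSucc_iff.2 this
  cover := by
    ext x
    simp only [Finset.mem_union, Finset.mem_biUnion, Finset.mem_image, Finset.mem_univ,
      true_and, iff_true]
    rcases eq_or_ne x (Fin.last m) with rfl | hx
    · exact Or.inr ⟨(0 : Fin (k + 1)), by simp⟩
    · obtain ⟨y, rfl⟩ : ∃ y : Fin m, Fin.castSucc y = x :=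
        ⟨x.castPred hx, Fin.castSucc_castPred x hx⟩
      have hy : y ∈ (Finset.univ.biUnion t.I) ∪ (Finset.image t.idx Finset.univ) := by
        rw [t.cover]; exact mem_univ _
      rcases Finset.mem_union.1 hy with h | h
      · obtain ⟨β, -, hb⟩ := Finset.mem_biUnion.1 h
        refine Or.inl ⟨β.succ, ?_⟩
        simp only [Fin.cases_succ]
        exact Finset.mem_image_of_mem _ hb
      · obtain ⟨β, -, hb⟩ := Finset.mem_image.1 h
        refine Or.inr ⟨β.succ, ?_⟩
        simp only [Fin.cases_succ]
        rw [hb]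

lemma bwd_type1 (t : Splitting m (k + 1)) :
    ∀ α, ∀ x ∈ (bwd t).I α, (x : ℕ) ≠ m := by
  intro α x hx
  rcases Fin.eq_zero_or_eq_succ α with rfl | ⟨β, rfl⟩
  · simp only [bwd, Fin.cases_zero] at hx
    exact absurd hx (Finset.notMem_empty _)
  · simp only [bwd, Fin.cases_succ] at hx
    obtain ⟨y, -, rfl⟩ := Finset.mem_image.1 hx
    simp only [Fin.coe_castSucc]
    omega

lemma left_inv (s : Splitting (m + 1) (k + 2))
    (hs : ∀ α, ∀ x ∈ s.I α, (x : ℕ) ≠ m) : bwd (fwd s hs) = s := by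
  apply Splitting.ext'
  · funext α
    rcases Fin.eq_zero_or_eq_succ α with rfl | ⟨β, rfl⟩
    · simp only [bwd, Fin.cases_zero]
      exact (I0_empty s hs).symm
    · simp only [bwd, fwd, Fin.cases_succ]
      ext x
      simp only [Finset.mem_image, Finset.mem_preimage]
      constructor
      · rintro ⟨y, hy, rfl⟩; exact hy
      · intro hx
        have hxl : x ≠ Fin.last m := by
          intro h
          exact hs _ _ hx (by rw [h]; rfl)
        exact ⟨x.castPred hxl, by rw [Fin.castSucc_castPred]; exact hx,
          Fin.castSucc_castPred x hxl⟩
  · funext α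
    rcases Fin.eq_zero_or_eq_succ (α : Fin (k + 1)) with rfl | ⟨β, rfl⟩
    · simp only [bwd, Fin.cases_zero]
      exact (idx0_eq_last s hs).symm
    · simp only [bwd, fwd, Fin.cases_succ]
      exact Fin.ext rfl

lemma right_inv (t : Splitting m (k + 1)) : fwd (bwd t) (bwd_type1 t) = t := by
  apply Splitting.ext'
  · funext β
    simp only [fwd, bwd, Fin.cases_succ]
    ext y
    simp only [Finset.mem_preimage, Finset.mem_image]
    constructor
    · rintro ⟨z, hz, he⟩
      rwa [Fin.castSucc_inj.1 he] at hz
    · intro hy; exact ⟨y, hy, rfl⟩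
  · funext β
    simp only [fwd, bwd, Fin.cases_succ]
    exact Fin.ext rfl

end Type1Aux

open Type1Aux in
/-- A `k`-splitting of `m+1` is of *type 1* when `m+1` (encoded as `Fin.last m`, i.e.
`(x : ℕ) = m`) belongs to none of the sets `I_α`.  For `m ≥ 1` and `1 ≤ k ≤ m+2`, the
type-1 `k`-splittings of `m+1` are in bijection with the `(k-1)`-splittings of `m`;
in particular no `1`-splitting of `m+1` is of type 1. -/
theorem type1_splittings_equiv (m k' : ℕ) (hm : 1 ≤ m) (hk : k' + 1 ≤ m + 2) :
    Nonempty
      ({s : Splitting (m + 1) (k' + 1) // ∀ α, ∀ x ∈ s.I α, (x : ℕ) ≠ m} ≃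
        Splitting m k') ∧
    ∀ s : Splitting (m + 1) 1, ∃ α, ∃ x ∈ s.I α, (x : ℕ) = m := by
  refine ⟨?_, no_type1_one m⟩
  rcases k' with _ | k
  · -- both sides empty
    haveI hL : IsEmpty {s : Splitting (m + 1) 1 // ∀ α, ∀ x ∈ s.I α, (x : ℕ) ≠ m} := by
      refine ⟨fun ⟨s, hs⟩ => ?_⟩
      obtain ⟨α, x, hx, hxm⟩ := no_type1_one m s
      exact hs α x hx hxm
    haveI hR : IsEmpty (Splitting m 0) := by
      refine ⟨fun t => ?_⟩
      have h := t.cover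
      have h1 : (Finset.univ.biUnion t.I) = ∅ := by simp
      haveI : IsEmpty (Fin (0 - 1)) := Fin.isEmpty
      have h2 : Finset.image t.idx Finset.univ = ∅ := by
        rw [Finset.univ_eq_empty, Finset.image_empty]
      rw [h1, h2, Finset.empty_union] at h
      exact absurd (h.symm ▸ Finset.mem_univ (⟨0, hm⟩ : Fin m)) (Finset.notMem_empty _)
    exact ⟨Equiv.equivOfIsEmpty _ _⟩
  · exact ⟨{
      toFun := fun s => fwd s.1 s.2
      invFun := fun t => ⟨bwd t, bwd_type1 t⟩
      left_inv := fun s => Subtype.ext (left_inv s.1 s.2)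
      right_inv := fun t => right_inv t }⟩
end

section
/- Let H → ℂ be the Hilbert field with each fiber a fixed separable infinite-dimensional Hilbert space with orthonormal basis (φ_j)_{j≥0}, smooth sections Γ^∞ = { Σ_{l=0}^{k} a_l φ_l : k finite, a_l ∈ C^∞(ℂ) }, and connection determined by ∇_{∂/∂s} φ_j = (j+1) k φ_j and ∇_{∂/∂s̄} φ_j = −(j+1) k̄ φ_j, where k = ∂g/∂s for a real-valued smooth function g on ℂ. Then the curvature satisfies R(∂/∂s, ∂/∂s̄) φ_j = −(j+1)·(Δg/2)·φ_j (up to a fixed nonzero constant factor depending on conventions), so at any point s₀ with Δg(s₀) ≠ 0 the densely defined operator R(∂/∂s, ∂/∂s̄) on the fiber H_{s₀} is unbounded. -/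
open Complex

/-- Wirtinger derivative `∂/∂s`. -/
noncomputable def wirtinger (g : ℂ → ℂ) (s : ℂ) : ℂ :=
  (fderiv ℝ g s 1 - Complex.I * fderiv ℝ g s Complex.I) / 2

/-- Wirtinger derivative `∂/∂s̄`. -/
noncomputable def wirtingerBar (g : ℂ → ℂ) (s : ℂ) : ℂ :=
  (fderiv ℝ g s 1 + Complex.I * fderiv ℝ g s Complex.I) / 2

/-- The Laplacian `Δg = ∂²g/∂x² + ∂²g/∂y²`. -/
noncomputable def laplacian (g : ℂ → ℂ) (s : ℂ) : ℂ :=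
  fderiv ℝ (fun z => fderiv ℝ g z 1) s 1 +
    fderiv ℝ (fun z => fderiv ℝ g z Complex.I) s Complex.I

/-- The coefficient of `φ_j` in `R(∂/∂s, ∂/∂s̄) φ_j` for the Hilbert field over `ℂ` with
`∇_{∂/∂s} φ_j = (j+1) k φ_j` and `∇_{∂/∂s̄} φ_j = −(j+1) k̄ φ_j`: with
`a(z) = (j+1)k(z)`, `b(z) = −(j+1) conj (k z)` the coefficients of `∇_{∂/∂s̄}φ_j`
and `∇_{∂/∂s}φ_j`, the curvature coefficient is
`[∂/∂s b + (j+1)k b] − [∂/∂s̄ a − (j+1)k̄ a]` (the bracket `[∂/∂s, ∂/∂s̄]` vanishes). -/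
noncomputable def curvCoeff (k : ℂ → ℂ) (j : ℕ) (s : ℂ) : ℂ :=
  (wirtinger (fun z => -((j : ℂ) + 1) * starRingEnd ℂ (k z)) s +
      ((j : ℂ) + 1) * k s * (-((j : ℂ) + 1) * starRingEnd ℂ (k s))) -
    (wirtingerBar (fun z => ((j : ℂ) + 1) * k z) s +
      (-((j : ℂ) + 1) * starRingEnd ℂ (k s)) * (((j : ℂ) + 1) * k s))

lemma im_fderiv_zero {f : ℂ → ℂ} {s v : ℂ} (hf : DifferentiableAt ℝ f s)
    (h : ∀ z, (f z).im = 0) : (fderiv ℝ f s v).im = 0 := by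
  have h1 : HasFDerivAt (fun z => (f z).im) (Complex.imCLM.comp (fderiv ℝ f s)) s :=
    Complex.imCLM.hasFDerivAt.comp s hf.hasFDerivAt
  have h2 : HasFDerivAt (fun _ : ℂ => (0 : ℝ)) (Complex.imCLM.comp (fderiv ℝ f s)) s := by
    have : (fun z => (f z).im) = fun _ : ℂ => (0 : ℝ) := funext h
    rwa [this] at h1
  have h3 : Complex.imCLM.comp (fderiv ℝ f s) = 0 := ((hasFDerivAt_const (0:ℝ) s).unique h2).symm
  have := ContinuousLinearMap.ext_iff.mp h3 v
  simpa using this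

lemma wirt_conj_mul {k : ℂ → ℂ} (c : ℂ) {s : ℂ} (hkd : DifferentiableAt ℝ k s) :
    wirtinger (fun z => c * starRingEnd ℂ (k z)) s
      = c * starRingEnd ℂ (wirtingerBar k s) := by
  have hc : HasFDerivAt (fun z => starRingEnd ℂ (k z))
      (Complex.conjCLE.toContinuousLinearMap.comp (fderiv ℝ k s)) s :=
    Complex.conjCLE.toContinuousLinearMap.hasFDerivAt.comp s hkd.hasFDerivAt
  have h2 := hc.const_mul c
  unfold wirtinger wirtingerBar
  rw [h2.fderiv]
  simp [Complex.conjCLE_apply, map_add, map_mul, Complex.conj_I, map_ofNat]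
  ring

lemma wirtBar_mul {k : ℂ → ℂ} (c : ℂ) {s : ℂ} (hkd : DifferentiableAt ℝ k s) :
    wirtingerBar (fun z => c * k z) s = c * wirtingerBar k s := by
  unfold wirtingerBar
  rw [fderiv_const_mul hkd c]
  simp
  ring

/-- For the Hilbert field over `ℂ` with fibers a fixed separable Hilbert space with
orthonormal basis `(φ_j)`, `∇_{∂/∂s} φ_j = (j+1)kφ_j`, `∇_{∂/∂s̄} φ_j = −(j+1)k̄φ_j`,
`k = ∂g/∂s` for a real-valued smooth `g`: the curvature satisfies
`R(∂/∂s,∂/∂s̄) φ_j = −(j+1)(Δg/2) φ_j` (up to a fixed nonzero constant depending on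
conventions), and at any `s₀` with `Δg(s₀) ≠ 0` the curvature operator
`φ_j ↦ (curvature coefficient) • φ_j` is unbounded on the fiber, i.e. admits no
continuous linear extension. -/
theorem curvature_of_example_unbounded
    (X : Type*) [NormedAddCommGroup X] [InnerProductSpace ℂ X]
    (φ : ℕ → X) (hφ : Orthonormal ℂ φ)
    (g : ℂ → ℂ) (hg_smooth : ContDiff ℝ (⊤ : ℕ∞) g) (hg_real : ∀ z, (g z).im = 0)
    (k : ℂ → ℂ) (hk : k = wirtinger g) :
    (∃ c : ℂ, c ≠ 0 ∧ ∀ (j : ℕ) (s : ℂ),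
        curvCoeff k j s = -((j : ℂ) + 1) * c * laplacian g s) ∧
    ∀ s₀ : ℂ, laplacian g s₀ ≠ 0 →
      ¬∃ B : X →L[ℂ] X, ∀ j : ℕ, B (φ j) = curvCoeff k j s₀ • φ j := by
  subst hk
  have hfd : ContDiff ℝ (⊤ : ℕ∞) (fderiv ℝ g) := hg_smooth.fderiv_right (by simp)
  have hD1 : ContDiff ℝ (⊤ : ℕ∞) (fun z => fderiv ℝ g z 1) := hfd.clm_apply contDiff_const
  have hDI : ContDiff ℝ (⊤ : ℕ∞) (fun z => fderiv ℝ g z Complex.I) := hfd.clm_apply contDiff_const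
  have hweq : wirtinger g =
      fun z => (2:ℂ)⁻¹ * (fderiv ℝ g z 1 - Complex.I * fderiv ℝ g z Complex.I) := by
    funext z
    unfold wirtinger
    ring
  have hkdiff : Differentiable ℝ (wirtinger g) := by
    rw [hweq]
    exact ((hD1.differentiable (by simp)).sub
      ((hDI.differentiable (by simp)).const_mul Complex.I)).const_mul ((2:ℂ)⁻¹)
  have hkderiv : ∀ s v, fderiv ℝ (wirtinger g) s v =
      (fderiv ℝ (fun z => fderiv ℝ g z 1) s v -
        Complex.I * fderiv ℝ (fun z => fderiv ℝ g z Complex.I) s v) / 2 := by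
    intro s v
    rw [hweq, fderiv_const_mul ((hD1.differentiable (by simp) s).fun_sub
        ((hDI.differentiable (by simp) s).const_mul Complex.I)) ((2:ℂ)⁻¹),
      fderiv_fun_sub (hD1.differentiable (by simp) s)
        ((hDI.differentiable (by simp) s).const_mul Complex.I),
      fderiv_const_mul (hDI.differentiable (by simp) s) Complex.I]
    simp [smul_eq_mul]
    ring
  have hsym : ∀ s, fderiv ℝ (fun z => fderiv ℝ g z 1) s Complex.I =
      fderiv ℝ (fun z => fderiv ℝ g z Complex.I) s 1 := by
    intro s
    have hsy := (hg_smooth.contDiffAt (x := s)).isSymmSndFDerivAt (by rw [minSmoothness_of_isRCLikeNormedField]; exact WithTop.coe_le_coe.mpr (le_top : (2 : ℕ∞) ≤ ⊤))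
    have e1 : fderiv ℝ (fun z => fderiv ℝ g z 1) s Complex.I
        = fderiv ℝ (fderiv ℝ g) s Complex.I 1 := by
      rw [fderiv_clm_apply (hfd.differentiable (by simp) s) (differentiableAt_const _)]
      simp
    have e2 : fderiv ℝ (fun z => fderiv ℝ g z Complex.I) s 1
        = fderiv ℝ (fderiv ℝ g) s 1 Complex.I := by
      rw [fderiv_clm_apply (hfd.differentiable (by simp) s) (differentiableAt_const _)]
      simp
    rw [e1, e2, hsy.eq]
  have hlapim : ∀ s, (laplacian g s).im = 0 := by
    intro s
    have h1 : (fderiv ℝ (fun z => fderiv ℝ g z 1) s 1).im = 0 :=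
      im_fderiv_zero (hD1.differentiable (by simp) s)
        (fun z => im_fderiv_zero (hg_smooth.differentiable (by simp) z) hg_real)
    have h2 : (fderiv ℝ (fun z => fderiv ℝ g z Complex.I) s Complex.I).im = 0 :=
      im_fderiv_zero (hDI.differentiable (by simp) s)
        (fun z => im_fderiv_zero (hg_smooth.differentiable (by simp) z) hg_real)
    simp [laplacian, Complex.add_im, h1, h2]
  have hW : ∀ s, wirtingerBar (wirtinger g) s = laplacian g s / 4 := by
    intro s
    unfold wirtingerBar laplacian
    rw [hkderiv s 1, hkderiv s Complex.I, hsym s]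
    linear_combination (-(fderiv ℝ (fun z => fderiv ℝ g z Complex.I) s Complex.I) / 4) *
      Complex.I_sq
  have hcoeff : ∀ (j : ℕ) (s : ℂ),
      curvCoeff (wirtinger g) j s = -((j : ℂ) + 1) * (1/2) * laplacian g s := by
    intro j s
    unfold curvCoeff
    rw [wirt_conj_mul (-((j:ℂ)+1)) (hkdiff s), wirtBar_mul ((j:ℂ)+1) (hkdiff s), hW s]
    have hre : starRingEnd ℂ (laplacian g s / 4) = laplacian g s / 4 := by
      rw [map_div₀, Complex.conj_eq_iff_im.mpr (hlapim s), map_ofNat]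
    rw [hre]
    ring
  refine ⟨⟨1/2, by norm_num, hcoeff⟩, ?_⟩
  intro s₀ hL
  rintro ⟨B, hB⟩
  have hLpos : 0 < ‖laplacian g s₀‖ := norm_pos_iff.mpr hL
  have hbound : ∀ j : ℕ, ((j:ℝ)+1) * (‖laplacian g s₀‖/2) ≤ ‖B‖ := by
    intro j
    have h1 := B.le_opNorm (φ j)
    rw [hB j, norm_smul, hφ.1 j, mul_one, mul_one, hcoeff j s₀] at h1
    have hnj : ‖-((j:ℂ)+1)‖ = (j:ℝ)+1 := by
      rw [norm_neg, show ((j:ℂ)+1) = ((j+1 : ℕ) : ℂ) by push_cast; ring,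
        Complex.norm_natCast]
      push_cast
      ring
    have hhalf : ‖(1/2 : ℂ)‖ = 1/2 := by norm_num
    rw [norm_mul, norm_mul, hnj, hhalf] at h1
    calc ((j:ℝ)+1) * (‖laplacian g s₀‖/2)
        = ((j:ℝ)+1) * (1/2) * ‖laplacian g s₀‖ := by ring
      _ ≤ ‖B‖ := h1
  obtain ⟨m, hm⟩ := exists_nat_gt (‖B‖ * 2 / ‖laplacian g s₀‖)
  have h2 := hbound m
  have hm' : ‖B‖ * 2 / ‖laplacian g s₀‖ < (m:ℝ) + 1 := by linarith
  rw [div_lt_iff₀ hLpos] at hm'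
  nlinarith [h2, hm', hLpos]
end

section
/- Let T be a densely defined linear operator on a Hilbert space X with an orthonormal basis (φ_j)_{j≥0} such that T φ_j = c_j φ_j where c_j ∈ ℂ and sup_j |c_j| = ∞. Then T does not extend to a bounded operator on X. Consequently, a Hilbert field whose curvature operator at some point acts as φ_j ↦ (j+1) c φ_j with c ≠ 0 cannot be induced from any hermitian Hilbert bundle with hermitian connection (whose curvature is always bounded on each fiber). -/
/-- A densely defined operator sending an orthonormal family `(φ_j)` to `c_j φ_j` with
`sup |c_j| = ∞` admits no bounded extension.  Consequently a Hilbert field whose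
curvature at a point acts on an orthonormal basis of the fiber as `φ_j ↦ (j+1)c φ_j`
with `c ≠ 0` cannot be induced from any hermitian Hilbert bundle with hermitian
connection, whose curvature is a bounded operator on each fiber. -/
theorem unbounded_diagonal_operator
    (X : Type*) [NormedAddCommGroup X] [InnerProductSpace ℂ X]
    (φ : ℕ → X) (hφ : Orthonormal ℂ φ) (c : ℕ → ℂ)
    (hc : ¬BddAbove (Set.range fun j => ‖c j‖)) :
    (¬∃ B : X →L[ℂ] X, ∀ j : ℕ, B (φ j) = c j • φ j) ∧
    ∀ c₀ : ℂ, c₀ ≠ 0 →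
      ¬∃ B : X →L[ℂ] X, ∀ j : ℕ, B (φ j) = (((j : ℂ) + 1) * c₀) • φ j := by
  have key : ∀ (d : ℕ → ℂ) (B : X →L[ℂ] X), (∀ j : ℕ, B (φ j) = d j • φ j) →
      ∀ j, ‖d j‖ ≤ ‖B‖ := by
    intro d B hB j
    have h1 : ‖B (φ j)‖ ≤ ‖B‖ * ‖φ j‖ := B.le_opNorm _
    rw [hB j, norm_smul, hφ.1 j, mul_one, mul_one] at h1
    exact h1
  constructor
  · rintro ⟨B, hB⟩
    exact hc ⟨‖B‖, by rintro x ⟨j, rfl⟩; exact key c B hB j⟩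
  · rintro c₀ hc₀ ⟨B, hB⟩
    obtain ⟨n, hn⟩ := exists_nat_gt (‖B‖ / ‖c₀‖)
    have h := key (fun j => ((j : ℂ) + 1) * c₀) B hB n
    have hc₀' : 0 < ‖c₀‖ := norm_pos_iff.mpr hc₀
    rw [norm_mul] at h
    have hnorm : ‖((n : ℂ) + 1)‖ = (n : ℝ) + 1 := by
      rw [show ((n : ℂ) + 1) = ((n + 1 : ℕ) : ℂ) by push_cast; ring,
        Complex.norm_natCast]
      push_cast; ring
    rw [hnorm] at h
    have : ‖B‖ / ‖c₀‖ < (n : ℝ) + 1 := lt_of_lt_of_le hn (by linarith)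
    rw [div_lt_iff₀ hc₀'] at this
    linarith
end
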